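/- Let p_f : X̃_f → X_f be a free G-cover of finite connected graphs with finite abelian Galois group G, let F_f ⊆ E(X_f), and let p : X̃ → X be the harmonic G-cover obtained by contracting p_f along F_f (so E(X) = E(X_f)∖F_f). Then the matroid of p is the deletion of F_f from the matroid of p_f: a subset F ⊆ E(X_f)∖F_f is independent in M*(X̃/X) if and only if it is independent in M*(X̃_f/X_f); equivalently, every connected component of X∖F is G-nontrivial (for p) if and only if every connected component of X_f∖F is G-nontrivial (for p_f). -/

import Mathlib

set_option autoImplicit false
set_option maxHeartbeats 1000000

/-- A graph in the sense of Serre: a finite set of vertices, a finite set of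
half-edges with a fixed-point-free involution, and a root map. -/
structure SerreGraph where
  V : Type
  H : Type
  fintypeV : Fintype V
  fintypeH : Fintype H
  decEqV : DecidableEq V
  decEqH : DecidableEq H
  inv : H → H
  inv_inv : ∀ h, inv (inv h) = h
  inv_ne : ∀ h, inv h ≠ h
  root : H → V

attribute [instance] SerreGraph.fintypeV SerreGraph.fintypeH SerreGraph.decEqV SerreGraph.decEqH

namespace SerreGraph

/-- Edges are orbits `{h, inv h}` of the involution. -/
def Edge (X : SerreGraph) : Type := Quot (fun h h' : X.H => h' = X.inv h)

/-- The edge underlying a half-edge. -/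
def edgeOf (X : SerreGraph) (h : X.H) : X.Edge := Quot.mk _ h

lemma edgeOf_surjective (X : SerreGraph) : Function.Surjective X.edgeOf :=
  fun e => Quot.exists_rep e

lemma edgeOf_inv (X : SerreGraph) (h : X.H) : X.edgeOf (X.inv h) = X.edgeOf h :=
  Quot.sound (X.inv_inv h).symm

instance (X : SerreGraph) : Finite X.Edge := Quot.finite _
noncomputable instance (X : SerreGraph) : Fintype X.Edge := Fintype.ofFinite _
noncomputable instance (X : SerreGraph) : DecidableEq X.Edge := Classical.decEq _

/-- One step of adjacency in the graph obtained by deleting the edges in `F`. -/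
def adjStep (X : SerreGraph) (F : Finset X.Edge) (u v : X.V) : Prop :=
  ∃ h : X.H, X.root h = u ∧ X.root (X.inv h) = v ∧ X.edgeOf h ∉ F

/-- `u` and `v` lie in the same connected component of `X ∖ F`. -/
def compRel (X : SerreGraph) (F : Finset X.Edge) (u v : X.V) : Prop :=
  Relation.ReflTransGen (X.adjStep F) u v

/-- A graph is connected if it is nonempty and any two vertices are joined by a path. -/
def Connected (X : SerreGraph) : Prop :=
  Nonempty X.V ∧ ∀ u v : X.V, X.compRel ∅ u v

/-- The vertex set of the connected component of `v` in `X ∖ F`. -/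
noncomputable def compVerts (X : SerreGraph) (F : Finset X.Edge) (v : X.V) : Finset X.V :=
  (Set.toFinite {u | X.compRel F v u}).toFinset

/-- The set of connected components (as vertex sets) of `X ∖ F`. -/
noncomputable def components (X : SerreGraph) (F : Finset X.Edge) : Finset (Finset X.V) :=
  Finset.univ.image (X.compVerts F)

/-- The edges of `X ∖ F` belonging to a component with vertex set `C`. -/
noncomputable def edgesIn (X : SerreGraph) (F : Finset X.Edge) (C : Finset X.V) :
    Finset X.Edge :=
  (Set.toFinite {e | e ∉ F ∧ ∃ h, X.edgeOf h = e ∧ X.root h ∈ C}).toFinset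

/-- A spanning tree: a spanning-connected set of edges of cardinality `|V| - 1`. -/
def IsSpanningTree (X : SerreGraph) (T : Finset X.Edge) : Prop :=
  (∀ u v : X.V, Relation.ReflTransGen
      (fun a b => ∃ h, X.root h = a ∧ X.root (X.inv h) = b ∧ X.edgeOf h ∈ T) u v) ∧
  T.card + 1 = Fintype.card X.V

noncomputable def spanningTrees (X : SerreGraph) : Finset (Finset X.Edge) :=
  (Set.toFinite {T | X.IsSpanningTree T}).toFinset

/-- The number of spanning trees of `X`; by Kirchhoff's theorem this is `|Jac(X)|`. -/
noncomputable def numSpanningTrees (X : SerreGraph) : ℕ := X.spanningTrees.card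

/-- The genus `g(X) = |E(X)| - |V(X)| + 1` of a (connected) graph. -/
noncomputable def genus (X : SerreGraph) : ℕ :=
  Fintype.card X.Edge + 1 - Fintype.card X.V

/-- The Jacobian polynomial `J_X = ∑_T ∏_{e ∉ T} x_e`, summed over spanning trees. -/
noncomputable def jacobianPoly (X : SerreGraph) (R : Type) [CommRing R] :
    MvPolynomial X.Edge R :=
  ∑ T ∈ X.spanningTrees, ∏ e ∈ Tᶜ, MvPolynomial.X e

/-- A closed path: a nonempty list of half-edges, consecutively matched head-to-tail,
including from the last one back to the first. -/
def IsClosedPath (X : SerreGraph) (l : List X.H) : Prop :=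
  l ≠ [] ∧ List.Chain' (fun a b => X.root (X.inv a) = X.root b) (l ++ l.take 1)

/-- A cycle with pairwise distinct edges, all belonging to `S`. -/
def IsEdgeCycle (X : SerreGraph) (S : Finset X.Edge) (l : List X.H) : Prop :=
  X.IsClosedPath l ∧ (∀ h ∈ l, X.edgeOf h ∈ S) ∧ (l.map X.edgeOf).Nodup

/-- An edge is a loop if its two root vertices coincide. -/
def IsLoop (X : SerreGraph) (e : X.Edge) : Prop :=
  ∃ h, X.edgeOf h = e ∧ X.root h = X.root (X.inv h)

/-- An orientation: a choice of half-edge (source half) for every edge. -/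
structure Orientation (X : SerreGraph) where
  pick : X.Edge → X.H
  pick_spec : ∀ e, X.edgeOf (pick e) = e

/-- The voltage of a half-edge: `η(e)` if it is traversed in the chosen orientation,
`η(e)⁻¹` otherwise. -/
def halfVoltage {G : Type} [Group G] (X : SerreGraph) (o : X.Orientation)
    (η : X.Edge → G) (h : X.H) : G :=
  if h = o.pick (X.edgeOf h) then η (X.edgeOf h) else (η (X.edgeOf h))⁻¹

/-- The (Frobenius) voltage of a path of half-edges. -/
def pathVoltage {G : Type} [Group G] (X : SerreGraph) (o : X.Orientation)
    (η : X.Edge → G) (l : List X.H) : G :=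
  (l.map (X.halfVoltage o η)).prod

/-- A morphism of Serre graphs. -/
structure Hom (X Y : SerreGraph) where
  vMap : X.V → Y.V
  hMap : X.H → Y.H
  hMap_inv : ∀ h, hMap (X.inv h) = Y.inv (hMap h)
  root_hMap : ∀ h, Y.root (hMap h) = vMap (X.root h)

/-- The induced map on edges. -/
def Hom.edgeMap {X Y : SerreGraph} (f : Hom X Y) : X.Edge → Y.Edge :=
  Quot.map f.hMap (fun a b hab => by rw [hab, f.hMap_inv])

/-- A morphism is harmonic with local degree function `d` if for every vertex `v`
upstairs and every half-edge `h` rooted at its image, `d v` is the number of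
half-edges at `v` mapping to `h`. -/
structure IsHarmonic {X Y : SerreGraph} (f : Hom X Y) (d : X.V → ℕ) : Prop where
  pos : ∀ v, 0 < d v
  balanced : ∀ (v : X.V) (h : Y.H), Y.root h = f.vMap v →
    d v = Nat.card {h' : X.H // X.root h' = v ∧ f.hMap h' = h}

/-- A harmonic Galois cover with Galois group `G`: a harmonic morphism of degree `|G|`
together with an equivariant `G`-action that is transitive on vertex fibers and simply
transitive on edge fibers. -/
structure GCover (G : Type) [Group G] [Fintype G] (Xt X : SerreGraph)
    extends Hom Xt X where
  d : Xt.V → ℕ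
  harm : IsHarmonic toHom d
  deg_eq : ∀ v : X.V,
    ∑ w ∈ Finset.univ.filter (fun w => toHom.vMap w = v), d w = Fintype.card G
  smulV : G → Xt.V → Xt.V
  smulH : G → Xt.H → Xt.H
  one_smulV : ∀ w, smulV 1 w = w
  mul_smulV : ∀ g g' w, smulV (g * g') w = smulV g (smulV g' w)
  one_smulH : ∀ h, smulH 1 h = h
  mul_smulH : ∀ g g' h, smulH (g * g') h = smulH g (smulH g' h)
  smulH_inv : ∀ g h, smulH g (Xt.inv h) = Xt.inv (smulH g h)
  root_smulH : ∀ g h, Xt.root (smulH g h) = smulV g (Xt.root h)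
  vMap_smulV : ∀ g w, toHom.vMap (smulV g w) = toHom.vMap w
  hMap_smulH : ∀ g h, toHom.hMap (smulH g h) = toHom.hMap h
  d_smulV : ∀ g w, d (smulV g w) = d w
  vertex_trans : ∀ w w' : Xt.V, toHom.vMap w = toHom.vMap w' → ∃ g, smulV g w = w'
  edge_trans : ∀ ht ht' : Xt.H,
    (toHom.hMap ht' = toHom.hMap ht ∨ toHom.hMap ht' = X.inv (toHom.hMap ht)) →
    ∃ g, smulH g ht = ht' ∨ smulH g ht = Xt.inv ht'
  edge_free : ∀ (g : G) (ht : Xt.H),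
    (smulH g ht = ht ∨ smulH g ht = Xt.inv ht) → g = 1

namespace GCover

variable {G : Type} [Group G] [Fintype G] {Xt X : SerreGraph}

/-- The cover is free if all local degrees are one. -/
def IsFree (c : GCover G Xt X) : Prop := ∀ w, c.d w = 1

/-- The dilation subgroup of a vertex: the common stabilizer of the vertices in its fiber. -/
def dilation (c : GCover G Xt X) (v : X.V) : Set G :=
  {g | ∀ w : Xt.V, c.vMap w = v → c.smulV g w = w}

/-- One step of adjacency upstairs, through half-edges lying over `X ∖ F`. -/
def liftStep (c : GCover G Xt X) (F : Finset X.Edge) (a b : Xt.V) : Prop :=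
  ∃ ht : Xt.H, Xt.root ht = a ∧ Xt.root (Xt.inv ht) = b ∧ X.edgeOf (c.hMap ht) ∉ F

/-- The number of connected components of the preimage of the component of `v` in `X ∖ F`. -/
noncomputable def numLiftComponents (c : GCover G Xt X) (F : Finset X.Edge) (v : X.V) : ℕ :=
  Nat.card (Quot (fun a b : {w : Xt.V // X.compRel F v (c.vMap w)} => c.liftStep F a.1 b.1))

/-- The connected component of `v` in `X ∖ F` is `G`-nontrivial, i.e. the restriction of the
cover over it is not isomorphic to the trivial `G`-cover (equivalently, its preimage does
not have exactly `|G|` connected components). -/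
def GNontrivialAt (c : GCover G Xt X) (F : Finset X.Edge) (v : X.V) : Prop :=
  c.numLiftComponents F v ≠ Fintype.card G

/-- Independent sets of the matroid `M*(X̃/X)`. -/
def Indep (c : GCover G Xt X) (F : Finset X.Edge) : Prop :=
  ∀ v : X.V, c.GNontrivialAt F v

/-- Bases of the matroid `M*(X̃/X)`: maximal independent sets. -/
def IsBasisD (c : GCover G Xt X) (F : Finset X.Edge) : Prop :=
  c.Indep F ∧ ∀ F' : Finset X.Edge, F ⊆ F' → c.Indep F' → F' = F

/-- The dilated `G`-voltage assignment `η` (together with a section `σ` of the vertex map)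
represents the cover: for each edge `e`, some lift of `e` runs from `σ(s(e))` to
`η(e) • σ(t(e))`. -/
structure IsVoltageRep (c : GCover G Xt X) (o : X.Orientation) (σ : X.V → Xt.V)
    (η : X.Edge → G) : Prop where
  sec : ∀ v, c.vMap (σ v) = v
  lift : ∀ e : X.Edge, ∃ ht : Xt.H, c.hMap ht = o.pick e ∧
    Xt.root ht = σ (X.root (o.pick e)) ∧
    Xt.root (Xt.inv ht) = c.smulV (η e) (σ (X.root (X.inv (o.pick e))))

/-- The component of `v` in `X ∖ F` is nontrivial for the cover twisted by the character
`ρ`: it contains a vertex whose dilation group has nontrivial image under `ρ`, or a closed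
path whose voltage has nontrivial image under `ρ`. -/
def RhoNontrivialAt (c : GCover G Xt X) (o : X.Orientation) (η : X.Edge → G)
    (ρ : G →* ℂ) (F : Finset X.Edge) (v : X.V) : Prop :=
  (∃ u : X.V, X.compRel F v u ∧ ∃ g ∈ c.dilation u, ρ g ≠ 1) ∨
  (∃ l : List X.H, X.IsClosedPath l ∧
    (∀ h ∈ l, X.edgeOf h ∉ F ∧ X.compRel F v (X.root h)) ∧
    ρ (X.pathVoltage o η l) ≠ 1)

/-- Bases of the `ρ`-twisted matroid `M*(X̃/X, ρ)`: maximal subsets `F` such that every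
connected component of `X ∖ F` is `ρ`-nontrivial. -/
def IsBasisRho (c : GCover G Xt X) (o : X.Orientation) (η : X.Edge → G)
    (ρ : G →* ℂ) (F : Finset X.Edge) : Prop :=
  (∀ v : X.V, c.RhoNontrivialAt o η ρ F v) ∧
  ∀ F' : Finset X.Edge, F ⊆ F' → (∀ v : X.V, c.RhoNontrivialAt o η ρ F' v) → F' = F

end GCover

/-- The weight of a connected component with edge set `S`: `|1 - ρ(η(C))|²` where `η(C)` is
the voltage of its unique cycle, if it has one, and `1` otherwise (tree components). -/
noncomputable def cycleWeight {G : Type} [Group G] (X : SerreGraph) (o : X.Orientation)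
    (η : X.Edge → G) (ρ : G →* ℂ) (S : Finset X.Edge) : ℝ := by
  classical exact
  if hc : ∃ l, X.IsEdgeCycle S l then
    ‖(1 : ℂ) - ρ (X.pathVoltage o η hc.choose)‖ ^ 2
  else 1

/-- The weight `w_ρ(F)`: the product of the weights of the connected components of `X ∖ F`. -/
noncomputable def basisWeight {G : Type} [Group G] (X : SerreGraph) (o : X.Orientation)
    (η : X.Edge → G) (ρ : G →* ℂ) (F : Finset X.Edge) : ℝ :=
  ∏ C ∈ X.components F, cycleWeight X o η ρ (X.edgesIn F C)

/-- The weight `w(M*(X̃/X, ρ))` of the `ρ`-twisted matroid: the sum of the weights of its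
bases. -/
noncomputable def GCover.twistedWeight {G : Type} [Group G] [Fintype G] {Xt X : SerreGraph}
    (c : GCover G Xt X) (o : X.Orientation) (η : X.Edge → G) (ρ : G →* ℂ) : ℝ :=
  ∑ F ∈ (Set.toFinite {F : Finset X.Edge | c.IsBasisRho o η ρ F}).toFinset,
    basisWeight X o η ρ F

/-- The weight polynomial `P_{X̃/X,ρ} = ∑_F w_ρ(F) ∏_{e ∈ F} x_e` of the `ρ`-twisted
matroid, summed over its bases. -/
noncomputable def GCover.twistedWeightPoly {G : Type} [Group G] [Fintype G]
    {Xt X : SerreGraph} (c : GCover G Xt X) (o : X.Orientation) (η : X.Edge → G)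
    (ρ : G →* ℂ) : MvPolynomial X.Edge ℝ :=
  ∑ F ∈ (Set.toFinite {F : Finset X.Edge | c.IsBasisRho o η ρ F}).toFinset,
    MvPolynomial.C (basisWeight X o η ρ F) * ∏ e ∈ F, MvPolynomial.X e

end SerreGraph
namespace SerreGraph

/-- One contraction step: `a` and `b` are joined by an edge belonging to `F`. -/
def contractStep (X : SerreGraph) (F : Finset X.Edge) (a b : X.V) : Prop :=
  ∃ h, X.edgeOf h ∈ F ∧ X.root h = a ∧ X.root (X.inv h) = b

/-- Data exhibiting `Xc` as the contraction of `X` along the edge set `F`: the vertices of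
`Xc` are the connected components of the subgraph spanned by `F`, and the half-edges of `Xc`
are the half-edges of `X` not lying on `F`. -/
structure ContractionData (X Xc : SerreGraph) (F : Finset X.Edge) where
  vMap : X.V → Xc.V
  hMap : (h : X.H) → X.edgeOf h ∉ F → Xc.H
  hMap_injective : ∀ h₁ hh₁ h₂ hh₂, hMap h₁ hh₁ = hMap h₂ hh₂ → h₁ = h₂
  hMap_surjective : ∀ k : Xc.H, ∃ h hh, hMap h hh = k
  hMap_inv : ∀ h hh hh', hMap (X.inv h) hh' = Xc.inv (hMap h hh)
  root_hMap : ∀ h hh, Xc.root (hMap h hh) = vMap (X.root h)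
  vMap_surjective : Function.Surjective vMap
  vMap_eq_iff : ∀ u v, vMap u = vMap v ↔ Relation.ReflTransGen (X.contractStep F) u v

/-- The valency of a vertex (loops counted twice). -/
noncomputable def valency (X : SerreGraph) (v : X.V) : ℕ :=
  Nat.card {h : X.H // X.root h = v}

/-- The Laplacian matrix `L = Q - A` of a graph. -/
noncomputable def lapl (X : SerreGraph) : Matrix X.V X.V ℤ :=
  Matrix.of fun u v =>
    (if u = v then (X.valency u : ℤ) else 0) -
      (Nat.card {h : X.H // X.root h = u ∧ X.root (X.inv h) = v} : ℤ)

/-- The Laplacian as a homomorphism on divisors. -/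
noncomputable def laplHom (X : SerreGraph) : (X.V → ℤ) →+ (X.V → ℤ) where
  toFun := fun D u => ∑ v, X.lapl u v * D v
  map_zero' := by funext u; simp
  map_add' := by
    intro a b; funext u
    simp [mul_add, Finset.sum_add_distrib]

/-- Divisors of total degree zero. -/
noncomputable def div0 (X : SerreGraph) : AddSubgroup (X.V → ℤ) where
  carrier := {D | ∑ v, D v = 0}
  add_mem' := by
    intro a b ha hb
    simp only [Set.mem_setOf_eq, Pi.add_apply] at *
    simp [Finset.sum_add_distrib, ha, hb]
  zero_mem' := by simp
  neg_mem' := by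
    intro a ha
    simp only [Set.mem_setOf_eq, Pi.neg_apply] at *
    simp [ha]

/-- The subgroup of principal divisors: the image of the Laplacian. -/
noncomputable def principal (X : SerreGraph) : AddSubgroup (X.V → ℤ) :=
  (laplHom X).range

/-- The Jacobian (critical) group `Jac(X) = Div₀(X) / Im L`. -/
noncomputable def jac (X : SerreGraph) : Type :=
  X.div0 ⧸ ((X.principal).addSubgroupOf X.div0)

noncomputable instance (X : SerreGraph) : AddCommGroup X.jac :=
  inferInstanceAs (AddCommGroup (X.div0 ⧸ ((X.principal).addSubgroupOf X.div0)))

/-- The pushforward of divisors along a graph morphism. -/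
noncomputable def pushforward {Xt X : SerreGraph} (f : Hom Xt X) (D : Xt.V → ℤ) :
    X.V → ℤ :=
  fun v => ∑ w ∈ Finset.univ.filter (fun w => f.vMap w = v), D w

/-- The diagonal valency matrix `Q` (over `ℂ`). -/
noncomputable def qMatrix (X : SerreGraph) : Matrix X.V X.V ℂ :=
  Matrix.of fun u v => if u = v then (X.valency u : ℂ) else 0

/-- The `ρ`-twisted adjacency matrix `A_ρ`. -/
noncomputable def twistedAdj {G : Type} [Group G] (X : SerreGraph) (o : X.Orientation)
    (η : X.Edge → G) (ρ : G →* ℂ) : Matrix X.V X.V ℂ :=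
  Matrix.of fun u v =>
    (∑ e ∈ Finset.univ.filter
        (fun e => X.root (o.pick e) = u ∧ X.root (X.inv (o.pick e)) = v), ρ (η e)) +
    (∑ e ∈ Finset.univ.filter
        (fun e => X.root (o.pick e) = v ∧ X.root (X.inv (o.pick e)) = u),
          (starRingEnd ℂ) (ρ (η e)))

/-- The `ρ`-twisted Laplacian `L_ρ = Q - A_ρ`. -/
noncomputable def twistedLapl {G : Type} [Group G] (X : SerreGraph) (o : X.Orientation)
    (η : X.Edge → G) (ρ : G →* ℂ) : Matrix X.V X.V ℂ :=
  X.qMatrix - X.twistedAdj o η ρ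

/-- The reciprocal `ζ_M(s, x_e, X)⁻¹ = det(I - W)` of the metric zeta function, where `W`
is the edge matrix with entries `s^{x_e}` (two-term determinant formula). -/
noncomputable def zetaMInv (X : SerreGraph) (x : X.Edge → ℝ) (s : ℝ) : ℝ :=
  Matrix.det ((1 : Matrix X.H X.H ℝ) - Matrix.of fun a b : X.H =>
    if X.root (X.inv a) = X.root b ∧ b ≠ X.inv a then s ^ (x (X.edgeOf a)) else 0)

/-- The reciprocal of the Ihara zeta function: the metric zeta with all lengths one. -/
noncomputable def zetaInv (X : SerreGraph) (s : ℝ) : ℝ :=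
  X.zetaMInv (fun _ => 1) s

/-- The reciprocal `L_M(s, x_e, X̃/X, ρ)⁻¹ = det(I - W_ρ)` of the metric Artin `L`-function
of the cover defined by the voltage assignment `η` (two-term determinant formula). -/
noncomputable def LMInv {G : Type} [Group G] (X : SerreGraph) (o : X.Orientation)
    (η : X.Edge → G) (ρ : G →* ℂ) (x : X.Edge → ℝ) (s : ℝ) : ℂ :=
  Matrix.det ((1 : Matrix X.H X.H ℂ) - Matrix.of fun a b : X.H =>
    if X.root (X.inv a) = X.root b ∧ b ≠ X.inv a then
      ρ (X.halfVoltage o η a) * ((s ^ (x (X.edgeOf a)) : ℝ) : ℂ)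
    else 0)

/-- The weight polynomial of a free cover defined by the voltage assignment `η`, twisted by
`ρ`: the sum over all `(g-1)`-element edge sets `F` all of whose complementary components
have genus one of `∏ᵢ |1 - ρ(η(Xᵢ))|² ∏_{e ∈ F} x_e`. -/
noncomputable def freeWeightPoly {G : Type} [Group G] (X : SerreGraph)
    (o : X.Orientation) (η : X.Edge → G) (ρ : G →* ℂ) : MvPolynomial X.Edge ℝ :=
  ∑ F ∈ (Set.toFinite {F : Finset X.Edge |
      F.card + Fintype.card X.V = Fintype.card X.Edge ∧
      ∀ C ∈ X.components F, (X.edgesIn F C).card = C.card}).toFinset,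
    MvPolynomial.C (basisWeight X o η ρ F) * ∏ e ∈ F, MvPolynomial.X e

/-- The `j`-th vertex on the chain subdividing the edge `e` into `n e` parts. -/
noncomputable def subVertex (X : SerreGraph) (o : X.Orientation) (n : X.Edge → ℕ)
    (e : X.Edge) (j : ℕ) : X.V ⊕ ((e : X.Edge) × Fin (n e - 1)) :=
  if _h0 : j = 0 then Sum.inl (X.root (o.pick e))
  else if h : j < n e then Sum.inr ⟨e, ⟨j - 1, by omega⟩⟩
  else Sum.inl (X.root (X.inv (o.pick e)))

/-- The graph obtained from `X` by replacing each edge `e` by a chain of `n e` edges. -/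
noncomputable def subdivide (X : SerreGraph) (o : X.Orientation) (n : X.Edge → ℕ) :
    SerreGraph where
  V := X.V ⊕ ((e : X.Edge) × Fin (n e - 1))
  H := (e : X.Edge) × (Fin (n e) × Bool)
  fintypeV := inferInstance
  fintypeH := inferInstance
  decEqV := Classical.decEq _
  decEqH := Classical.decEq _
  inv := fun p => ⟨p.1, (p.2.1, !p.2.2)⟩
  inv_inv := by rintro ⟨e, i, b⟩; simp
  inv_ne := by rintro ⟨e, i, b⟩ hcon; simp at hcon
  root := fun p => X.subVertex o n p.1 (if p.2.2 then (p.2.1 : ℕ) + 1 else (p.2.1 : ℕ))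

end SerreGraph

/-- The cycle graph with `k` vertices, every pair of cyclically adjacent vertices joined by
`M` parallel edges. -/
def cycleGraph (k M : ℕ) : SerreGraph where
  V := Fin k
  H := Fin k × Fin M × Bool
  fintypeV := inferInstance
  fintypeH := inferInstance
  decEqV := inferInstance
  decEqH := inferInstance
  inv := fun p => (p.1, p.2.1, !p.2.2)
  inv_inv := by rintro ⟨i, j, b⟩; simp
  inv_ne := by rintro ⟨i, j, b⟩ hcon; simp at hcon
  root := fun p => if p.2.2 then finRotate k p.1 else p.1

open SerreGraph in
/-- **Lemma.** Let `p_f : X̃_f → X_f` be a free `G`-cover with finite abelian Galois group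
`G`, let `F_f ⊆ E(X_f)`, and let `p : X̃ → X` be the harmonic `G`-cover obtained by
contracting `p_f` along `F_f` (exhibited by contraction data compatible with the
projections and the `G`-actions). Then for every `F ⊆ E(X_f) ∖ F_f` with image
`F' ⊆ E(X)`: every connected component of `X ∖ F'` is `G`-nontrivial for `p` if and only
if every connected component of `X_f ∖ F` is `G`-nontrivial for `p_f`. -/
theorem matroid_deletion_of_contraction
    (G : Type) [CommGroup G] [Fintype G] (Xf Xtf X Xt : SerreGraph)
    (hXf : Xf.Connected) (hX : X.Connected)
    (cf : GCover G Xtf Xf) (hfree : cf.IsFree) (c : GCover G Xt X)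
    (Ff : Finset Xf.Edge) (Fft : Finset Xtf.Edge)
    (hFft : ∀ e : Xtf.Edge, e ∈ Fft ↔ cf.toHom.edgeMap e ∈ Ff)
    (cd : ContractionData Xf X Ff) (cdt : ContractionData Xtf Xt Fft)
    (hcompatV : ∀ w : Xtf.V, c.vMap (cdt.vMap w) = cd.vMap (cf.vMap w))
    (hcompatH : ∀ (h : Xtf.H) (hh : Xtf.edgeOf h ∉ Fft)
        (hh' : Xf.edgeOf (cf.hMap h) ∉ Ff),
      c.hMap (cdt.hMap h hh) = cd.hMap (cf.hMap h) hh')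
    (hequivV : ∀ (g : G) (w : Xtf.V), cdt.vMap (cf.smulV g w) = c.smulV g (cdt.vMap w))
    (hequivH : ∀ (g : G) (h : Xtf.H) (hh : Xtf.edgeOf h ∉ Fft)
        (hh' : Xtf.edgeOf (cf.smulH g h) ∉ Fft),
      cdt.hMap (cf.smulH g h) hh' = c.smulH g (cdt.hMap h hh))
    (hdeg : ∀ w : Xtf.V, c.d (cdt.vMap w) =
      Nat.card {u : Xtf.V // cf.vMap u = cf.vMap w ∧
        Relation.ReflTransGen (Xtf.contractStep Fft) u w})
    (F : Finset Xf.Edge) (hF : ∀ e ∈ F, e ∉ Ff)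
    (F' : Finset X.Edge)
    (hF' : ∀ (h : Xf.H) (hh : Xf.edgeOf h ∉ Ff),
      (X.edgeOf (cd.hMap h hh) ∈ F' ↔ Xf.edgeOf h ∈ F)) :
    (∀ v : X.V, c.GNontrivialAt F' v) ↔ (∀ v : Xf.V, cf.GNontrivialAt F v) := by
  
  classical
  -- edge map compatibility
  have hFft' : ∀ ht : Xtf.H, Xtf.edgeOf ht ∈ Fft ↔ Xf.edgeOf (cf.hMap ht) ∈ Ff := by
    intro ht
    exact hFft (Xtf.edgeOf ht)
  -- contraction relation downstairs implies compRel F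
  have T0 : ∀ u u' : Xf.V, Relation.ReflTransGen (Xf.contractStep Ff) u u' →
      Xf.compRel F u u' := by
    intro u u' h
    refine Relation.ReflTransGen.mono ?_ _ _ h
    rintro a b ⟨k, hmem, hr1, hr2⟩
    exact ⟨k, hr1, hr2, fun hc => hF _ hc hmem⟩
  -- T1 : compRel downstairs transfers to the contracted graph
  have T1 : ∀ u u' : Xf.V, Xf.compRel F u u' →
      X.compRel F' (cd.vMap u) (cd.vMap u') := by
    intro u u' h
    induction h with
    | refl => exact Relation.ReflTransGen.refl
    | tail hab hbc ih =>
      obtain ⟨k, hk1, hk2, hk3⟩ := hbc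
      by_cases hFfk : Xf.edgeOf k ∈ Ff
      · have heq : cd.vMap (Xf.root k) = cd.vMap (Xf.root (Xf.inv k)) := by
          rw [cd.vMap_eq_iff]
          exact Relation.ReflTransGen.single ⟨k, hFfk, rfl, rfl⟩
        rw [← hk1, heq, hk2] at ih
        exact ih
      · have hinv : Xf.edgeOf (Xf.inv k) ∉ Ff := by
          rw [Xf.edgeOf_inv]; exact hFfk
        refine ih.tail ⟨cd.hMap k hFfk, ?_, ?_, ?_⟩
        · rw [cd.root_hMap, hk1]
        · rw [← cd.hMap_inv k hFfk hinv, cd.root_hMap, hk2]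
        · intro hc
          exact hk3 ((hF' k hFfk).1 hc)
  -- T2 : compRel in the contracted graph lifts back
  have T2 : ∀ a b : X.V, X.compRel F' a b → ∀ u u' : Xf.V,
      cd.vMap u = a → cd.vMap u' = b → Xf.compRel F u u' := by
    intro a b h
    induction h with
    | refl =>
      intro u u' h1 h2
      exact T0 u u' ((cd.vMap_eq_iff u u').1 (h1.trans h2.symm))
    | tail hab hbc ih =>
      intro u u' h1 h2
      obtain ⟨k, hk1, hk2, hk3⟩ := hbc
      obtain ⟨hh, hhmem, hhk⟩ := cd.hMap_surjective k
      have hinv : Xf.edgeOf (Xf.inv hh) ∉ Ff := by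
        rw [Xf.edgeOf_inv]; exact hhmem
      have hmid := hk1
      rw [← hhk, cd.root_hMap hh hhmem] at hmid
      have hstep : Xf.adjStep F (Xf.root hh) (Xf.root (Xf.inv hh)) := by
        refine ⟨hh, rfl, rfl, fun hc => hk3 ?_⟩
        rw [← hhk]
        exact (hF' hh hhmem).2 hc
      have hend : cd.vMap (Xf.root (Xf.inv hh)) = cd.vMap u' := by
        rw [← cd.root_hMap _ hinv, cd.hMap_inv hh hhmem hinv, hhk, hk2, h2]
      exact ((ih u (Xf.root hh) h1 hmid).tail hstep).trans
        (T0 _ _ ((cd.vMap_eq_iff _ _).1 hend))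
  -- upstairs: contraction relation implies liftStep path
  have T0t : ∀ u u' : Xtf.V, Relation.ReflTransGen (Xtf.contractStep Fft) u u' →
      Relation.ReflTransGen (cf.liftStep F) u u' := by
    intro u u' h
    refine Relation.ReflTransGen.mono ?_ _ _ h
    rintro a b ⟨kt, hmem, hr1, hr2⟩
    exact ⟨kt, hr1, hr2, fun hc => hF _ hc ((hFft' kt).1 hmem)⟩
  -- T1t : liftStep path transfers to contracted cover
  have T1t : ∀ u u' : Xtf.V, Relation.ReflTransGen (cf.liftStep F) u u' →
      Relation.ReflTransGen (c.liftStep F') (cdt.vMap u) (cdt.vMap u') := by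
    intro u u' h
    induction h with
    | refl => exact Relation.ReflTransGen.refl
    | tail hab hbc ih =>
      obtain ⟨kt, hk1, hk2, hk3⟩ := hbc
      by_cases hFfk : Xtf.edgeOf kt ∈ Fft
      · have heq : cdt.vMap (Xtf.root kt) = cdt.vMap (Xtf.root (Xtf.inv kt)) := by
          rw [cdt.vMap_eq_iff]
          exact Relation.ReflTransGen.single ⟨kt, hFfk, rfl, rfl⟩
        rw [← hk1, heq, hk2] at ih
        exact ih
      · have hFfk' : Xf.edgeOf (cf.hMap kt) ∉ Ff := fun hc => hFfk ((hFft' kt).2 hc)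
        have hinvt : Xtf.edgeOf (Xtf.inv kt) ∉ Fft := by
          rw [Xtf.edgeOf_inv]; exact hFfk
        refine ih.tail ⟨cdt.hMap kt hFfk, ?_, ?_, ?_⟩
        · rw [cdt.root_hMap, hk1]
        · rw [← cdt.hMap_inv kt hFfk hinvt, cdt.root_hMap, hk2]
        · rw [hcompatH kt hFfk hFfk']
          intro hc
          exact hk3 ((hF' (cf.hMap kt) hFfk').1 hc)
  -- T2t : liftStep path in contracted cover lifts back
  have T2t : ∀ a b : Xt.V, Relation.ReflTransGen (c.liftStep F') a b →
      ∀ u u' : Xtf.V, cdt.vMap u = a → cdt.vMap u' = b →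
      Relation.ReflTransGen (cf.liftStep F) u u' := by
    intro a b h
    induction h with
    | refl =>
      intro u u' h1 h2
      exact T0t u u' ((cdt.vMap_eq_iff u u').1 (h1.trans h2.symm))
    | tail hab hbc ih =>
      intro u u' h1 h2
      obtain ⟨kt, hk1, hk2, hk3⟩ := hbc
      obtain ⟨ht, htmem, hhk⟩ := cdt.hMap_surjective kt
      have htFf : Xf.edgeOf (cf.hMap ht) ∉ Ff := fun hc => htmem ((hFft' ht).2 hc)
      have hinvt : Xtf.edgeOf (Xtf.inv ht) ∉ Fft := by
        rw [Xtf.edgeOf_inv]; exact htmem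
      have hmid := hk1
      rw [← hhk, cdt.root_hMap ht htmem] at hmid
      have hstep : cf.liftStep F (Xtf.root ht) (Xtf.root (Xtf.inv ht)) := by
        refine ⟨ht, rfl, rfl, fun hc => hk3 ?_⟩
        rw [← hhk, hcompatH ht htmem htFf]
        exact (hF' (cf.hMap ht) htFf).2 hc
      have hend : cdt.vMap (Xtf.root (Xtf.inv ht)) = cdt.vMap u' := by
        rw [← cdt.root_hMap _ hinvt, cdt.hMap_inv ht htmem hinvt, hhk, hk2, h2]
      exact ((ih u (Xtf.root ht) h1 hmid).tail hstep).trans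
        (T0t _ _ ((cdt.vMap_eq_iff _ _).1 hend))
  -- symmetry of liftStep
  have symm_lift : Symmetric (c.liftStep F') := by
    rintro a b ⟨ht, h1, h2, h3⟩
    refine ⟨Xt.inv ht, h2, by rw [Xt.inv_inv]; exact h1, ?_⟩
    rw [c.toHom.hMap_inv, X.edgeOf_inv]
    exact h3
  have symm_liftf : Symmetric (cf.liftStep F) := by
    rintro a b ⟨ht, h1, h2, h3⟩
    refine ⟨Xtf.inv ht, h2, by rw [Xtf.inv_inv]; exact h1, ?_⟩
    rw [cf.toHom.hMap_inv, Xf.edgeOf_inv]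
    exact h3
  -- membership propagation
  have memprop : ∀ x y : Xt.V, Relation.ReflTransGen (c.liftStep F') x y →
      X.compRel F' (c.vMap x) (c.vMap y) := by
    intro x y h
    refine Relation.ReflTransGen.lift c.vMap ?_ _ _ h
    rintro a b ⟨ht, h1, h2, h3⟩
    exact ⟨c.hMap ht, by rw [c.toHom.root_hMap, h1],
      by rw [← c.toHom.hMap_inv, c.toHom.root_hMap, h2], h3⟩
  have mempropf : ∀ x y : Xtf.V, Relation.ReflTransGen (cf.liftStep F) x y →
      Xf.compRel F (cf.vMap x) (cf.vMap y) := by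
    intro x y h
    refine Relation.ReflTransGen.lift cf.vMap ?_ _ _ h
    rintro a b ⟨ht, h1, h2, h3⟩
    exact ⟨cf.hMap ht, by rw [cf.toHom.root_hMap, h1],
      by rw [← cf.toHom.hMap_inv, cf.toHom.root_hMap, h2], h3⟩
  -- key cardinality lemma
  have cardEq : ∀ vf : Xf.V,
      c.numLiftComponents F' (cd.vMap vf) = cf.numLiftComponents F vf := by
    intro vf
    set v := cd.vMap vf with hv
    -- subtype quotient characterization, contracted side
    have L3 : ∀ (x : {w : Xt.V // X.compRel F' v (c.vMap w)}) (b : Xt.V)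
        (h : Relation.ReflTransGen (c.liftStep F') x.1 b)
        (hb : X.compRel F' v (c.vMap b)),
        Quot.mk (fun a b : {w : Xt.V // X.compRel F' v (c.vMap w)} =>
          c.liftStep F' a.1 b.1) x = Quot.mk _ ⟨b, hb⟩ := by
      intro x b h
      induction h with
      | refl => intro hb; congr 1
      | tail hab hbc ih =>
        intro hb
        have hbmem : X.compRel F' v (c.vMap _) := x.2.trans (memprop _ _ hab)
        exact (ih hbmem).trans (Quot.sound hbc)
    have mkEq : ∀ (x y : {w : Xt.V // X.compRel F' v (c.vMap w)}),
        Quot.mk (fun a b : {w : Xt.V // X.compRel F' v (c.vMap w)} =>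
          c.liftStep F' a.1 b.1) x = Quot.mk _ y ↔
        Relation.ReflTransGen (c.liftStep F') x.1 y.1 := by
      intro x y
      constructor
      · intro h
        rw [Quot.eq] at h
        induction h with
        | rel a b hab => exact Relation.ReflTransGen.single hab
        | refl a => exact Relation.ReflTransGen.refl
        | symm a b _ ih => haveI : Std.Symm (c.liftStep F') := ⟨fun _ _ h => symm_lift h⟩; exact Std.Symm.symm _ _ ih
        | trans a b cc _ _ ih1 ih2 => exact ih1.trans ih2
      · intro h
        have := L3 x y.1 h y.2
        simpa using this
    -- subtype quotient characterization, uncontracted side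
    have L3f : ∀ (x : {w : Xtf.V // Xf.compRel F vf (cf.vMap w)}) (b : Xtf.V)
        (h : Relation.ReflTransGen (cf.liftStep F) x.1 b)
        (hb : Xf.compRel F vf (cf.vMap b)),
        Quot.mk (fun a b : {w : Xtf.V // Xf.compRel F vf (cf.vMap w)} =>
          cf.liftStep F a.1 b.1) x = Quot.mk _ ⟨b, hb⟩ := by
      intro x b h
      induction h with
      | refl => intro hb; congr 1
      | tail hab hbc ih =>
        intro hb
        have hbmem : Xf.compRel F vf (cf.vMap _) := x.2.trans (mempropf _ _ hab)
        exact (ih hbmem).trans (Quot.sound hbc)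
    have mkEqf : ∀ (x y : {w : Xtf.V // Xf.compRel F vf (cf.vMap w)}),
        Quot.mk (fun a b : {w : Xtf.V // Xf.compRel F vf (cf.vMap w)} =>
          cf.liftStep F a.1 b.1) x = Quot.mk _ y ↔
        Relation.ReflTransGen (cf.liftStep F) x.1 y.1 := by
      intro x y
      constructor
      · intro h
        rw [Quot.eq] at h
        induction h with
        | rel a b hab => exact Relation.ReflTransGen.single hab
        | refl a => exact Relation.ReflTransGen.refl
        | symm a b _ ih => haveI : Std.Symm (cf.liftStep F) := ⟨fun _ _ h => symm_liftf h⟩; exact Std.Symm.symm _ _ ih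
        | trans a b cc _ _ ih1 ih2 => exact ih1.trans ih2
      · intro h
        have := L3f x y.1 h y.2
        simpa using this
    -- the bijection
    have memmap : ∀ w : Xtf.V, Xf.compRel F vf (cf.vMap w) →
        X.compRel F' v (c.vMap (cdt.vMap w)) := by
      intro w hw
      rw [hcompatV]
      exact T1 _ _ hw
    let φ : Quot (fun a b : {w : Xtf.V // Xf.compRel F vf (cf.vMap w)} =>
          cf.liftStep F a.1 b.1) →
        Quot (fun a b : {w : Xt.V // X.compRel F' v (c.vMap w)} =>
          c.liftStep F' a.1 b.1) :=
      Quot.lift (fun w => Quot.mk _ ⟨cdt.vMap w.1, memmap w.1 w.2⟩)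
        (fun a b hab => (mkEq _ _).2 (T1t _ _ (Relation.ReflTransGen.single hab)))
    have hbij : Function.Bijective φ := by
      constructor
      · intro q1 q2
        induction q1 using Quot.ind with | _ a =>
        induction q2 using Quot.ind with | _ b =>
        intro h
        have h1 : Relation.ReflTransGen (c.liftStep F')
            (cdt.vMap a.1) (cdt.vMap b.1) := (mkEq _ _).1 h
        exact (mkEqf a b).2 (T2t _ _ h1 a.1 b.1 rfl rfl)
      · intro q
        induction q using Quot.ind with | _ x =>
        obtain ⟨wt, hwt⟩ := cdt.vMap_surjective x.1
        have hmemwt : Xf.compRel F vf (cf.vMap wt) := by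
          refine T2 v (c.vMap x.1) x.2 vf (cf.vMap wt) rfl ?_
          rw [← hcompatV, hwt]
        refine ⟨Quot.mk _ ⟨wt, hmemwt⟩, ?_⟩
        show Quot.mk _ (⟨cdt.vMap wt, _⟩ :
          {w : Xt.V // X.compRel F' v (c.vMap w)}) = Quot.mk _ x
        congr 1
        exact Subtype.ext hwt
    exact (Nat.card_eq_of_bijective φ hbij).symm
  -- conclude
  constructor
  · intro hall vf
    have h := hall (cd.vMap vf)
    unfold GCover.GNontrivialAt at h ⊢
    rwa [cardEq vf] at h
  · intro hall v
    obtain ⟨vf, rfl⟩ := cd.vMap_surjective v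
    have h := hall vf
    unfold GCover.GNontrivialAt at h ⊢
    rwa [cardEq vf]
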